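/- Every Boolean function f : {−1,1}^n → {−1,1} of degree at most d has at most 2^{2(d−1)} nonzero Fourier coefficients. -/

import Mathlib

noncomputable section

/-- The sign `±1` encoded by a Boolean: `false ↦ +1`, `true ↦ -1`. -/
def sgnR (a : Bool) : ℝ := if a then -1 else 1

/-- The Fourier coefficient `f̂(S)` of a real-valued function on the Boolean cube `{−1,1}^ι`
(encoded as `ι → Bool`, `false ↦ +1`, `true ↦ −1`). -/
def boolFourierCoeff {ι : Type*} [Fintype ι] [DecidableEq ι] (f : (ι → Bool) → ℝ)
    (S : Finset ι) : ℝ :=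
  ((2 : ℝ) ^ Fintype.card ι)⁻¹ * ∑ x : ι → Bool, f x * ∏ i ∈ S, sgnR (x i)

end

open Finset

namespace BoolSparseAux

variable {n : ℕ}

noncomputable def chi (S : Finset (Fin n)) (x : Fin n → Bool) : ℝ := ∏ i ∈ S, sgnR (x i)

lemma coeff_def (f : (Fin n → Bool) → ℝ) (S : Finset (Fin n)) :
    boolFourierCoeff f S = ((2 : ℝ) ^ n)⁻¹ * ∑ x : Fin n → Bool, f x * chi S x := by
  simp [boolFourierCoeff, chi]

lemma sum_chi_mul (x y : Fin n → Bool) :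
    ∑ S : Finset (Fin n), chi S x * chi S y = if x = y then (2 : ℝ) ^ n else 0 := by
  have h1 : ∀ S : Finset (Fin n), chi S x * chi S y
      = ∏ i ∈ S, (sgnR (x i) * sgnR (y i)) := by
    intro S; rw [chi, chi, Finset.prod_mul_distrib]
  have h2 : ∑ S : Finset (Fin n), chi S x * chi S y
      = ∏ i : Fin n, (sgnR (x i) * sgnR (y i) + 1) := by
    rw [Finset.prod_add]
    simp only [Finset.prod_const_one, mul_one]
    rw [← Finset.powerset_univ]
    exact Finset.sum_congr rfl fun S _ => h1 S
  rw [h2]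
  by_cases hxy : x = y
  · subst hxy
    simp only [if_pos rfl]
    have : ∀ i : Fin n, sgnR (x i) * sgnR (x i) + 1 = 2 := by
      intro i; cases x i <;> norm_num [sgnR]
    rw [Finset.prod_congr rfl fun i _ => this i, Finset.prod_const]
    simp
  · rw [if_neg hxy]
    obtain ⟨i, hi⟩ : ∃ i, x i ≠ y i := by
      by_contra h; push_neg at h; exact hxy (funext h)
    apply Finset.prod_eq_zero (Finset.mem_univ i)
    revert hi; cases x i <;> cases y i <;> norm_num [sgnR]

lemma inversion (f : (Fin n → Bool) → ℝ) (x : Fin n → Bool) :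
    ∑ S : Finset (Fin n), boolFourierCoeff f S * chi S x = f x := by
  have h2n : ((2 : ℝ) ^ n) ≠ 0 := by positivity
  have step1 : ∑ S : Finset (Fin n), boolFourierCoeff f S * chi S x
      = ∑ S : Finset (Fin n), ∑ y : Fin n → Bool,
          ((2 : ℝ) ^ n)⁻¹ * (f y * (chi S y * chi S x)) := by
    refine Finset.sum_congr rfl fun S _ => ?_
    rw [coeff_def, mul_assoc, Finset.sum_mul, Finset.mul_sum]
    exact Finset.sum_congr rfl fun y _ => by ring
  rw [step1, Finset.sum_comm]
  have step2 : ∀ y : Fin n → Bool, ∑ S : Finset (Fin n),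
      ((2 : ℝ) ^ n)⁻¹ * (f y * (chi S y * chi S x))
      = ((2 : ℝ) ^ n)⁻¹ * (f y * (if y = x then (2 : ℝ) ^ n else 0)) := by
    intro y
    rw [← Finset.mul_sum, ← Finset.mul_sum, sum_chi_mul]
  rw [Finset.sum_congr rfl fun y _ => step2 y]
  simp only [mul_ite, mul_zero]
  rw [Finset.sum_ite_eq' Finset.univ x
    (fun y => ((2 : ℝ) ^ n)⁻¹ * (f y * (2 : ℝ) ^ n))]
  rw [if_pos (Finset.mem_univ x)]
  field_simp

lemma parseval (f : (Fin n → Bool) → ℝ) :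
    ∑ S : Finset (Fin n), (boolFourierCoeff f S) ^ 2
      = ((2 : ℝ) ^ n)⁻¹ * ∑ x : Fin n → Bool, (f x) ^ 2 := by
  have step1 : ∑ S : Finset (Fin n), (boolFourierCoeff f S) ^ 2
      = ∑ S : Finset (Fin n), ∑ x : Fin n → Bool,
          ((2 : ℝ) ^ n)⁻¹ * (f x * (boolFourierCoeff f S * chi S x)) := by
    refine Finset.sum_congr rfl fun S _ => ?_
    rw [sq, coeff_def, mul_assoc, Finset.sum_mul, Finset.mul_sum]
    exact Finset.sum_congr rfl fun x _ => by ring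
  rw [step1, Finset.sum_comm, Finset.mul_sum]
  refine Finset.sum_congr rfl fun x _ => ?_
  rw [← Finset.mul_sum, ← Finset.mul_sum, inversion, sq]

lemma sum_between (A B : Finset (Fin n)) (hAB : A ⊆ B) (g : Finset (Fin n) → ℝ) :
    ∑ T ∈ Finset.univ.filter (fun T => A ⊆ T ∧ T ⊆ B), g T
      = ∑ V ∈ (B \ A).powerset, g (A ∪ V) := by
  refine Finset.sum_nbij' (fun T => T \ A) (fun V => A ∪ V) ?_ ?_ ?_ ?_ ?_
  · intro T hT
    rw [Finset.mem_filter] at hT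
    exact Finset.mem_powerset.2 (Finset.sdiff_subset_sdiff hT.2.2 Finset.Subset.rfl)
  · intro V hV
    rw [Finset.mem_powerset] at hV
    refine Finset.mem_filter.2 ⟨Finset.mem_univ _, Finset.subset_union_left, ?_⟩
    exact Finset.union_subset hAB (hV.trans (Finset.sdiff_subset))
  · intro T hT
    rw [Finset.mem_filter] at hT
    exact Finset.union_sdiff_of_subset hT.2.1
  · intro V hV
    rw [Finset.mem_powerset] at hV
    have hd : Disjoint A V := Finset.disjoint_left.2
      fun a haA haV => (Finset.mem_sdiff.1 (hV haV)).2 haA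
    show (A ∪ V) \ A = V
    rw [Finset.union_sdiff_cancel_left hd]
  · intro T hT
    rw [Finset.mem_filter] at hT
    rw [Finset.union_sdiff_of_subset hT.2.1]

lemma sum_neg_one_pow (W : Finset (Fin n)) :
    ∑ V ∈ W.powerset, (-1 : ℝ) ^ V.card = if W = ∅ then 1 else 0 := by
  have := Finset.sum_powerset_neg_one_pow_card (x := W)
  have h2 : ((∑ V ∈ W.powerset, (-1 : ℤ) ^ V.card : ℤ) : ℝ)
      = ∑ V ∈ W.powerset, (-1 : ℝ) ^ V.card := by push_cast; rfl
  rw [← h2, this]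
  split <;> norm_num

noncomputable def supSum (f : (Fin n → Bool) → ℝ) (T : Finset (Fin n)) : ℝ :=
  ∑ U ∈ Finset.univ.filter (fun U => T ⊆ U), boolFourierCoeff f U

lemma inner_alt (S U : Finset (Fin n)) :
    ∑ T ∈ Finset.univ.filter (fun T => S ⊆ T ∧ T ⊆ U), (-1 : ℝ) ^ T.card
      = if U = S then (-1 : ℝ) ^ S.card else 0 := by
  by_cases hSU : S ⊆ U
  · rw [sum_between S U hSU]
    have hcard : ∀ V ∈ (U \ S).powerset, (-1 : ℝ) ^ (S ∪ V).card
        = (-1 : ℝ) ^ S.card * (-1 : ℝ) ^ V.card := by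
      intro V hV
      rw [Finset.mem_powerset] at hV
      have hd : Disjoint S V := Finset.disjoint_left.2
        fun a haS haV => (Finset.mem_sdiff.1 (hV haV)).2 haS
      rw [Finset.card_union_of_disjoint hd, pow_add]
    rw [Finset.sum_congr rfl hcard, ← Finset.mul_sum, sum_neg_one_pow]
    by_cases hUS : U = S
    · subst hUS; simp
    · have : U \ S ≠ ∅ := by
        intro h
        exact hUS (Finset.Subset.antisymm
          ((Finset.sdiff_eq_empty_iff_subset).1 h) hSU)
      rw [if_neg this, if_neg hUS, mul_zero]
  · have hne : U ≠ S := fun h => hSU (h ▸ Finset.Subset.rfl)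
    rw [if_neg hne]
    apply Finset.sum_eq_zero
    intro T hT
    rw [Finset.mem_filter] at hT
    exact absurd (hT.2.1.trans hT.2.2) hSU

lemma mobius (f : (Fin n → Bool) → ℝ) (S : Finset (Fin n)) :
    boolFourierCoeff f S = (-1 : ℝ) ^ S.card *
      ∑ T ∈ Finset.univ.filter (fun T => S ⊆ T), (-1 : ℝ) ^ T.card * supSum f T := by
  have key : ∑ T ∈ Finset.univ.filter (fun T => S ⊆ T), (-1 : ℝ) ^ T.card * supSum f T
      = (-1 : ℝ) ^ S.card * boolFourierCoeff f S := by
    calc ∑ T ∈ Finset.univ.filter (fun T => S ⊆ T), (-1 : ℝ) ^ T.card * supSum f T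
        = ∑ T ∈ Finset.univ.filter (fun T => S ⊆ T),
            ∑ U ∈ Finset.univ.filter (fun U => T ⊆ U),
              (-1 : ℝ) ^ T.card * boolFourierCoeff f U := by
          exact Finset.sum_congr rfl fun T _ => by rw [supSum, Finset.mul_sum]
      _ = ∑ U : Finset (Fin n), ∑ T ∈ Finset.univ.filter (fun T => S ⊆ T ∧ T ⊆ U),
            (-1 : ℝ) ^ T.card * boolFourierCoeff f U := by
          apply Finset.sum_comm'
          intro T U
          simp only [Finset.mem_filter, Finset.mem_univ, true_and, and_comm]
      _ = ∑ U : Finset (Fin n),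
            (if U = S then (-1 : ℝ) ^ S.card else 0) * boolFourierCoeff f U := by
          refine Finset.sum_congr rfl fun U _ => ?_
          rw [← Finset.sum_mul, inner_alt]
      _ = (-1 : ℝ) ^ S.card * boolFourierCoeff f S := by
          simp only [ite_mul, zero_mul]
          rw [Finset.sum_ite_eq' Finset.univ S
            (fun U => (-1 : ℝ) ^ S.card * boolFourierCoeff f U)]
          rw [if_pos (Finset.mem_univ S)]
  rw [key, ← mul_assoc, ← pow_add, ← two_mul, pow_mul]
  norm_num

lemma supSum_eq (f : (Fin n → Bool) → ℝ) (T : Finset (Fin n)) :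
    (2 : ℝ) ^ T.card * supSum f T
      = ∑ x ∈ Finset.univ.filter (fun x : Fin n → Bool => ∀ i ∉ T, x i = false),
          f x * chi T x := by
  have hTn : T.card ≤ n := by simpa using Finset.card_le_univ T
  have h1 : supSum f T = ∑ V ∈ Tᶜ.powerset, boolFourierCoeff f (T ∪ V) := by
    rw [supSum]
    have heq : Finset.univ.filter (fun U : Finset (Fin n) => T ⊆ U)
        = Finset.univ.filter (fun U => T ⊆ U ∧ U ⊆ Finset.univ) :=
      Finset.filter_congr fun U _ => by simp [Finset.subset_univ]
    rw [heq, sum_between T Finset.univ (Finset.subset_univ T), ← Finset.compl_eq_univ_sdiff]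
  have h2 : ∀ x : Fin n → Bool, ∑ V ∈ Tᶜ.powerset, chi V x
      = if (∀ i ∉ T, x i = false) then (2 : ℝ) ^ (n - T.card) else 0 := by
    intro x
    have hpa := Finset.prod_add (fun i => sgnR (x i)) (fun _ => (1 : ℝ)) Tᶜ
    simp only [Finset.prod_const_one, mul_one] at hpa
    have : ∑ V ∈ Tᶜ.powerset, chi V x = ∏ i ∈ Tᶜ, (sgnR (x i) + 1) := by
      rw [hpa]; rfl
    rw [this]
    by_cases hP : ∀ i ∉ T, x i = false
    · rw [if_pos hP]
      have : ∀ i ∈ Tᶜ, sgnR (x i) + 1 = 2 := by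
        intro i hi
        rw [hP i (Finset.mem_compl.1 hi)]
        norm_num [sgnR]
      rw [Finset.prod_congr rfl this, Finset.prod_const, Finset.card_compl,
        Fintype.card_fin]
    · rw [if_neg hP]
      push_neg at hP
      obtain ⟨i, hiT, hxi⟩ := hP
      apply Finset.prod_eq_zero (Finset.mem_compl.2 hiT)
      have hxi' : x i = true := by simpa using hxi
      rw [hxi']
      norm_num [sgnR]
  have h3 : ∀ V ∈ Tᶜ.powerset, ∀ x : Fin n → Bool,
      chi (T ∪ V) x = chi T x * chi V x := by
    intro V hV x
    rw [Finset.mem_powerset] at hV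
    have hd : Disjoint T V := Finset.disjoint_left.2
      fun a haT haV => (Finset.mem_compl.1 (hV haV)) haT
    rw [chi, chi, chi, Finset.prod_union hd]
  have h4 : supSum f T = ((2 : ℝ) ^ n)⁻¹ * ((2 : ℝ) ^ (n - T.card) *
      ∑ x ∈ Finset.univ.filter (fun x : Fin n → Bool => ∀ i ∉ T, x i = false),
        f x * chi T x) := by
    rw [h1]
    calc ∑ V ∈ Tᶜ.powerset, boolFourierCoeff f (T ∪ V)
        = ∑ V ∈ Tᶜ.powerset, ∑ x : Fin n → Bool,
            ((2 : ℝ) ^ n)⁻¹ * (f x * chi T x * chi V x) := by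
          refine Finset.sum_congr rfl fun V hV => ?_
          rw [coeff_def, Finset.mul_sum]
          refine Finset.sum_congr rfl fun x _ => ?_
          rw [h3 V hV x]; ring
      _ = ∑ x : Fin n → Bool, ∑ V ∈ Tᶜ.powerset,
            ((2 : ℝ) ^ n)⁻¹ * (f x * chi T x * chi V x) := Finset.sum_comm
      _ = ((2 : ℝ) ^ n)⁻¹ * ∑ x : Fin n → Bool,
            (f x * chi T x) * ∑ V ∈ Tᶜ.powerset, chi V x := by
          rw [Finset.mul_sum]
          refine Finset.sum_congr rfl fun x _ => ?_
          rw [Finset.mul_sum, Finset.mul_sum]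
      _ = ((2 : ℝ) ^ n)⁻¹ * ∑ x : Fin n → Bool,
            (f x * chi T x) * (if (∀ i ∉ T, x i = false)
              then (2 : ℝ) ^ (n - T.card) else 0) :=
          congrArg (fun z => ((2 : ℝ) ^ n)⁻¹ * z)
            (Finset.sum_congr rfl fun x _ => by rw [h2 x])
      _ = ((2 : ℝ) ^ n)⁻¹ * ((2 : ℝ) ^ (n - T.card) *
            ∑ x ∈ Finset.univ.filter (fun x : Fin n → Bool => ∀ i ∉ T, x i = false),
              f x * chi T x) := by
          congr 1
          rw [Finset.mul_sum, Finset.sum_filter]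
          refine Finset.sum_congr rfl fun x _ => ?_
          split_ifs <;> ring
  rw [h4]
  have hpow : (2 : ℝ) ^ T.card * (2 : ℝ) ^ (n - T.card) = (2 : ℝ) ^ n := by
    rw [← pow_add, Nat.add_sub_cancel' hTn]
  have h2n : ((2 : ℝ) ^ n) ≠ 0 := by positivity
  field_simp
  rw [hpow]

lemma supSum_int (f : (Fin n → Bool) → ℝ) (hf : ∀ x, f x = 1 ∨ f x = -1)
    (T : Finset (Fin n)) :
    ∃ m : ℤ, (2 : ℝ) ^ T.card * supSum f T = (m : ℝ) ∧ (T ≠ ∅ → Even m) := by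
  classical
  set A : Finset (Fin n → Bool) :=
    Finset.univ.filter (fun x : Fin n → Bool => ∀ i ∉ T, x i = false) with hA
  set g : (Fin n → Bool) → ℤ := fun x =>
    (if f x = 1 then 1 else -1) * ∏ i ∈ T, (if x i then -1 else 1) with hgdef
  have hg : ∀ x, f x * chi T x = ((g x : ℤ) : ℝ) := by
    intro x
    have h1 : f x = (((if f x = 1 then 1 else -1 : ℤ)) : ℝ) := by
      rcases hf x with h | h <;> rw [h] <;> norm_num
    have h2 : chi T x = ((∏ i ∈ T, (if x i then (-1 : ℤ) else 1) : ℤ) : ℝ) := by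
      rw [chi]
      push_cast
      refine Finset.prod_congr rfl fun i _ => ?_
      cases x i <;> simp [sgnR]
    conv_lhs => rw [h1, h2]
    rw [hgdef]
    push_cast
    ring
  refine ⟨∑ x ∈ A, g x, ?_, ?_⟩
  · rw [supSum_eq f T, ← hA]
    push_cast
    exact Finset.sum_congr rfl fun x _ => hg x
  · intro hT
    have hcard : A.card = 2 ^ T.card := by
      have hAeq : A = Fintype.piFinset
          (fun i : Fin n => if i ∈ T then (Finset.univ : Finset Bool) else {false}) := by
        ext x
        rw [hA, Finset.mem_filter, Fintype.mem_piFinset]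
        constructor
        · rintro ⟨-, h⟩ i
          by_cases hi : i ∈ T
          · simp [hi]
          · simp [hi, h i hi]
        · intro h
          refine ⟨Finset.mem_univ _, fun i hi => ?_⟩
          have := h i
          rw [if_neg hi] at this
          simpa using this
      rw [hAeq, Fintype.card_piFinset]
      have : ∀ i : Fin n, ((if i ∈ T then (Finset.univ : Finset Bool) else {false}).card)
          = if i ∈ T then 2 else 1 := by
        intro i; split_ifs <;> simp
      rw [Finset.prod_congr rfl fun i _ => this i, Finset.prod_ite_mem,
        Finset.univ_inter, Finset.prod_const]
    have hzmod : ((∑ x ∈ A, g x : ℤ) : ZMod 2) = 0 := by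
      push_cast
      have hone : ∀ x ∈ A, ((g x : ℤ) : ZMod 2) = 1 := by
        intro x _
        rw [hgdef]
        push_cast
        have hfac : ∀ i ∈ T, ((if x i then (-1 : ZMod 2) else 1)) = 1 := by
          intro i _; split_ifs <;> decide
        rw [Finset.prod_congr rfl hfac, Finset.prod_const_one, mul_one]
        split_ifs <;> decide
      have hk : T.card ≠ 0 := by
        simpa [Finset.card_eq_zero] using hT
      rw [Finset.sum_congr rfl hone, Finset.sum_const, hcard, nsmul_eq_mul, mul_one]
      push_cast
      rw [show ((2 : ZMod 2)) = 0 by decide, zero_pow hk]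
    have hdvd := (ZMod.intCast_zmod_eq_zero_iff_dvd (∑ x ∈ A, g x) 2).1 hzmod
    have : (2 : ℤ) ∣ ∑ x ∈ A, g x := by exact_mod_cast hdvd
    exact even_iff_two_dvd.2 this

lemma sum_int {α : Type*} (s : Finset α) (g : α → ℝ) (h : ∀ a ∈ s, ∃ k : ℤ, g a = k) :
    ∃ k : ℤ, ∑ a ∈ s, g a = k := by
  classical
  induction s using Finset.induction_on with
  | empty => exact ⟨0, by simp⟩
  | @insert a s ha ih =>
    obtain ⟨k1, hk1⟩ := h a (Finset.mem_insert_self a s)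
    obtain ⟨k2, hk2⟩ := ih (fun b hb => h b (Finset.mem_insert_of_mem hb))
    exact ⟨k1 + k2, by rw [Finset.sum_insert ha, hk1, hk2]; push_cast; ring⟩

lemma gran (f : (Fin n → Bool) → ℝ) (hf : ∀ x, f x = 1 ∨ f x = -1) {d : ℕ}
    (hdeg : ∀ S : Finset (Fin n), d < S.card → boolFourierCoeff f S = 0)
    (hd : 1 ≤ d) (S : Finset (Fin n)) :
    ∃ m : ℤ, (2 : ℝ) ^ (d - 1) * boolFourierCoeff f S = m := by
  rw [mobius f S]
  have key : ∀ T ∈ Finset.univ.filter (fun T : Finset (Fin n) => S ⊆ T),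
      ∃ k : ℤ, (2 : ℝ) ^ (d - 1) * ((-1 : ℝ) ^ T.card * supSum f T) = k := by
    intro T _
    by_cases hTd : T.card ≤ d
    · obtain ⟨m, hm, hev⟩ := supSum_int f hf T
      by_cases hTe : T = ∅
      · subst hTe
        refine ⟨2 ^ (d - 1) * m, ?_⟩
        have hsup : supSum f ∅ = (m : ℝ) := by simpa using hm
        rw [hsup]
        push_cast
        simp
      · obtain ⟨r, hr⟩ := hev hTe
        refine ⟨(-1) ^ T.card * 2 ^ (d - T.card) * r, ?_⟩
        have h2 : ((2 : ℝ) ^ T.card) ≠ 0 := by positivity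
        have e1 : (2 : ℝ) ^ (d - 1) * 2 = 2 ^ d := by
          rw [← pow_succ, Nat.sub_add_cancel hd]
        have e2 : (2 : ℝ) ^ (d - T.card) * 2 ^ T.card = 2 ^ d := by
          rw [← pow_add, Nat.sub_add_cancel hTd]
        refine mul_right_cancel₀ h2 ?_
        calc (2 : ℝ) ^ (d - 1) * ((-1 : ℝ) ^ T.card * supSum f T) * 2 ^ T.card
            = (2 ^ (d - 1) * (-1 : ℝ) ^ T.card) * (2 ^ T.card * supSum f T) := by ring
          _ = (2 ^ (d - 1) * (-1 : ℝ) ^ T.card) * m := by rw [hm]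
          _ = (((-1) ^ T.card * 2 ^ (d - T.card) * r : ℤ) : ℝ) * 2 ^ T.card := by
              rw [hr]
              push_cast
              linear_combination ((-1 : ℝ) ^ T.card * (r : ℝ)) * e1
                - ((-1 : ℝ) ^ T.card * (r : ℝ)) * e2
    · push_neg at hTd
      refine ⟨0, ?_⟩
      have hz : supSum f T = 0 := Finset.sum_eq_zero fun U hU => by
        rw [Finset.mem_filter] at hU
        exact hdeg U (lt_of_lt_of_le hTd (Finset.card_le_card hU.2))
      rw [hz]
      simp
  obtain ⟨k, hk⟩ := sum_int _ _ key
  refine ⟨(-1) ^ S.card * k, ?_⟩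
  push_cast
  rw [← hk, ← Finset.mul_sum]
  ring

end BoolSparseAux

/-- Every Boolean function `f : {−1,1}^n → {−1,1}` of degree at most `d` has at most
`2^{2(d−1)}` nonzero Fourier coefficients. -/
theorem boolean_sparsity {n d : ℕ} (f : (Fin n → Bool) → ℝ)
    (hf : ∀ x, f x = 1 ∨ f x = -1)
    (hdeg : ∀ S : Finset (Fin n), d < S.card → boolFourierCoeff f S = 0) :
    (Finset.univ.filter fun S : Finset (Fin n) => boolFourierCoeff f S ≠ 0).card ≤
      2 ^ (2 * (d - 1)) := by
  classical
  set F := Finset.univ.filter fun S : Finset (Fin n) => boolFourierCoeff f S ≠ 0 with hF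
  by_cases hd : d = 0
  · subst hd
    have hsub : F ⊆ {∅} := by
      intro S hS
      rw [hF, Finset.mem_filter] at hS
      rw [Finset.mem_singleton]
      by_contra hne
      exact hS.2 (hdeg S (Finset.card_pos.2 (Finset.nonempty_iff_ne_empty.2 hne)))
    have := Finset.card_le_card hsub
    simpa using this
  · have hd1 : 1 ≤ d := Nat.one_le_iff_ne_zero.2 hd
    have hsum1 : ∑ S : Finset (Fin n), (boolFourierCoeff f S) ^ 2 = 1 := by
      rw [BoolSparseAux.parseval]
      have hfx : ∀ x : Fin n → Bool, (f x) ^ 2 = 1 := fun x => by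
        rcases hf x with h | h <;> rw [h] <;> norm_num
      rw [Finset.sum_congr rfl fun x _ => hfx x, Finset.sum_const]
      have hcard : (Finset.univ : Finset (Fin n → Bool)).card = 2 ^ n := by
        simp [Finset.card_univ]
      rw [hcard]
      have h2n : ((2 : ℝ) ^ n) ≠ 0 := by positivity
      simp [nsmul_eq_mul]
    have hlb : ∀ S ∈ F, ((2 : ℝ) ^ (2 * (d - 1)))⁻¹ ≤ (boolFourierCoeff f S) ^ 2 := by
      intro S hS
      rw [hF, Finset.mem_filter] at hS
      obtain ⟨m, hm⟩ := BoolSparseAux.gran f hf hdeg hd1 S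
      have h2 : ((2 : ℝ) ^ (d - 1)) ≠ 0 := by positivity
      have hm0 : m ≠ 0 := by
        intro h
        rw [h] at hm
        push_cast at hm
        exact hS.2 (by
          rcases mul_eq_zero.1 hm with h' | h'
          · exact absurd h' h2
          · exact h')
      have habs : (1 : ℝ) ≤ |(m : ℝ)| := by
        have : (1 : ℤ) ≤ |m| := Int.one_le_abs (by omega)
        calc (1 : ℝ) = ((1 : ℤ) : ℝ) := by norm_num
          _ ≤ ((|m| : ℤ) : ℝ) := by exact_mod_cast this
          _ = |(m : ℝ)| := by push_cast; rfl
      have h1m : (1 : ℝ) ≤ (m : ℝ) ^ 2 := by nlinarith [habs, sq_abs ((m : ℝ))]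
      have hc : boolFourierCoeff f S = (m : ℝ) / 2 ^ (d - 1) := by
        rw [eq_div_iff h2]
        linarith [hm]
      have hpw : ((2 : ℝ) ^ (d - 1)) ^ 2 = (2 : ℝ) ^ (2 * (d - 1)) := by
        rw [← pow_mul, Nat.mul_comm]
      rw [hc, div_pow, hpw]
      have hpos : (0 : ℝ) < (2 : ℝ) ^ (2 * (d - 1)) := by positivity
      calc ((2 : ℝ) ^ (2 * (d - 1)))⁻¹ = 1 / 2 ^ (2 * (d - 1)) := (one_div _).symm
        _ ≤ (m : ℝ) ^ 2 / 2 ^ (2 * (d - 1)) := by gcongr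
    have hFle : (F.card : ℝ) * ((2 : ℝ) ^ (2 * (d - 1)))⁻¹ ≤ 1 := by
      calc (F.card : ℝ) * ((2 : ℝ) ^ (2 * (d - 1)))⁻¹
          = ∑ _S ∈ F, ((2 : ℝ) ^ (2 * (d - 1)))⁻¹ := by
            rw [Finset.sum_const, nsmul_eq_mul]
        _ ≤ ∑ S ∈ F, (boolFourierCoeff f S) ^ 2 := Finset.sum_le_sum hlb
        _ ≤ ∑ S : Finset (Fin n), (boolFourierCoeff f S) ^ 2 :=
            Finset.sum_le_sum_of_subset_of_nonneg (Finset.filter_subset _ _)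
              (fun S _ _ => sq_nonneg _)
        _ = 1 := hsum1
    have hreal : (F.card : ℝ) ≤ (2 : ℝ) ^ (2 * (d - 1)) := by
      have hpos : (0 : ℝ) < (2 : ℝ) ^ (2 * (d - 1)) := by positivity
      have := mul_le_mul_of_nonneg_right hFle (le_of_lt hpos)
      rw [one_mul, mul_assoc, inv_mul_cancel₀ (ne_of_gt hpos), mul_one] at this
      exact this
    exact_mod_cast hreal
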